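/- Let q = r^2 with r an odd prime power, θ a primitive element of F_q, and q − 1 = e_1 f_1 = e_2 f_2 two factorizations into positive integers. Suppose there exists an integer l ≥ 2 with e_1 ≡ 2^l (mod 2^{l+1}) and 2^l | e_2 (in particular e_1 is even). Set α = θ^{e_1}, β = θ^{e_2}, γ = θ^{e_1/2}, A = ⟨α⟩, and B = ⟨β⟩. Then for all integers i and j, the cosets β^i A and γ^{2j+1} B are disjoint; equivalently, θ^{e_2 μ + e_1 ν} ≠ θ^{(e_1/2)(2μ' + 1) + e_2 ν'} for all integers μ, ν, μ', ν'. -/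

import Mathlib

/-!
Since `2^l` divides `e₁` and `e₂`, the coset `βⁱA` and the subgroup `B` lie in `H = ⟨θ^{2^l}⟩`.
As `2^l` also divides the order `e₁ f₁` of `θ`, a power `θ^n` lies in `H` only if `2^l ∣ n`.
The exponent `(e₁/2)(2j+1)` of `γ^{2j+1}` has `2`-adic valuation exactly `l - 1`, so
`γ^{2j+1} ∉ H`, and the coset `γ^{2j+1}B` misses `H` altogether.
-/

open Subgroup

section Group

variable {G : Type*} [Group G]

theorem pow_mem_zpowers_pow_of_dvd (g : G) {d n : ℕ} (h : d ∣ n) : g ^ n ∈ zpowers (g ^ d) := by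
  obtain ⟨c, rfl⟩ := h
  rw [pow_mul]
  exact pow_mem (mem_zpowers _) c

theorem zpow_mem_zpowers_pow_iff {g : G} {d : ℕ} (hd : d ∣ orderOf g) {k : ℤ} :
    g ^ k ∈ zpowers (g ^ d) ↔ (d : ℤ) ∣ k := by
  constructor
  · rintro ⟨m, hm⟩
    have hord : (orderOf g : ℤ) ∣ k - d * m := by
      rw [orderOf_dvd_iff_zpow_eq_one, zpow_sub, zpow_mul, zpow_natCast, ← hm, mul_inv_cancel]
    have := (Int.natCast_dvd_natCast.mpr hd).trans hord
    simpa using dvd_add this (dvd_mul_right (d : ℤ) m)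
  · rintro ⟨m, rfl⟩
    rw [zpow_mul, zpow_natCast]
    exact zpow_mem (mem_zpowers _) m

theorem disjoint_image_mul_of_le {H K₁ K₂ : Subgroup G} {a b : G} (ha : a ∈ H) (hb : b ∉ H)
    (hK₁ : K₁ ≤ H) (hK₂ : K₂ ≤ H) :
    Disjoint ((a * ·) '' (K₁ : Set G)) ((b * ·) '' (K₂ : Set G)) := by
  rw [Set.disjoint_left]
  rintro _ ⟨x, hx, rfl⟩ ⟨y, hy, hxy⟩
  apply hb
  rw [eq_mul_inv_of_mul_eq hxy]
  exact mul_mem (mul_mem ha (hK₁ hx)) (inv_mem (hK₂ hy))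

end Group

theorem exists_odd_half_eq_two_pow_mul {e k : ℕ} (he : e % 2 ^ (k + 2) = 2 ^ (k + 1)) :
    ∃ u, Odd u ∧ e / 2 = 2 ^ k * u := by
  obtain ⟨t, ht⟩ : ∃ t, e = 2 ^ (k + 2) * t + 2 ^ (k + 1) :=
    ⟨e / 2 ^ (k + 2), by rw [← he, Nat.div_add_mod]⟩
  refine ⟨2 * t + 1, odd_two_mul_add_one t, ?_⟩
  rw [ht, show 2 ^ (k + 2) * t + 2 ^ (k + 1) = 2 * (2 ^ k * (2 * t + 1)) by ring,
    Nat.mul_div_cancel_left _ two_pos]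

theorem not_two_pow_succ_dvd_two_pow_mul_odd {k : ℕ} {m : ℤ} (hm : Odd m) :
    ¬ (2 : ℤ) ^ (k + 1) ∣ 2 ^ k * m := by
  rw [pow_succ, mul_dvd_mul_iff_left (pow_ne_zero k two_ne_zero)]
  exact Int.not_even_iff_odd.mpr hm ∘ even_iff_two_dvd.mpr

theorem cosets_disjoint
    (r e1 f1 e2 l : ℕ)
    (hq1 : r ^ 2 - 1 = e1 * f1)
    (hl : 2 ≤ l) (he1 : e1 % 2 ^ (l + 1) = 2 ^ l) (he2 : 2 ^ l ∣ e2)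
    (F : Type*) [Field F] [Fintype F]
    (hF : Fintype.card F = r ^ 2)
    (θ : Fˣ) (hθ : ∀ x : Fˣ, x ∈ Subgroup.zpowers θ) :
    ∀ i j : ℤ,
      Disjoint
        (((θ ^ e2 : Fˣ) ^ i * ·) '' (Subgroup.zpowers (θ ^ e1) : Set Fˣ))
        (((θ ^ (e1 / 2) : Fˣ) ^ (2 * j + 1) * ·) '' (Subgroup.zpowers (θ ^ e2) : Set Fˣ)) := by
  intro i j
  obtain ⟨k, rfl⟩ : ∃ k, l = k + 1 := ⟨l - 1, by omega⟩
  obtain ⟨u, hu, he1_half⟩ := exists_odd_half_eq_two_pow_mul he1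
  have he1_dvd : 2 ^ (k + 1) ∣ e1 :=
    (Nat.dvd_mod_iff (pow_dvd_pow 2 (k + 1).le_succ)).mp (he1 ▸ dvd_rfl)
  have hord : 2 ^ (k + 1) ∣ orderOf θ := by
    rw [orderOf_eq_card_of_forall_mem_zpowers hθ, Nat.card_units, Nat.card_eq_fintype_card, hF, hq1]
    exact he1_dvd.mul_right f1
  refine disjoint_image_mul_of_le (H := zpowers (θ ^ (2 ^ (k + 1) : ℕ))) ?_ ?_ ?_ ?_
  · exact zpow_mem (pow_mem_zpowers_pow_of_dvd θ he2) i
  · rw [← zpow_natCast θ (e1 / 2), ← zpow_mul, zpow_mem_zpowers_pow_iff hord, he1_half]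
    push_cast
    rw [mul_assoc]
    exact not_two_pow_succ_dvd_two_pow_mul_odd (hu.natCast.mul (odd_two_mul_add_one j))
  · exact zpowers_le.mpr (pow_mem_zpowers_pow_of_dvd θ he1_dvd)
  · exact zpowers_le.mpr (pow_mem_zpowers_pow_of_dvd θ he2)
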